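/- Let S be a dense subsemigroup of ((0,∞),+), let B be an image partition regular matrix near zero over S (with rows indexed by a positive ordinal α and columns by δ), and let M ∈ M₀(S). Then the matrix (1̄ B 0 ; 0̄ 0 M), where 1̄ is the α×1 column of all 1's, is image partition regular near zero over S. -/

import Mathlib

noncomputable section

/-- Addition of ultrafilters on ℝ: `B ∈ uAdd p q ↔ {x | {y | x + y ∈ B} ∈ q} ∈ p`. -/
def uAdd (p q : Ultrafilter ℝ) : Ultrafilter ℝ :=
  p.bind fun x => q.map fun y => x + y

/-- `S` is a subsemigroup of `((0,∞),+)`. -/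
def IsPosSubsemigroup (S : Set ℝ) : Prop :=
  S.Nonempty ∧ S ⊆ Set.Ioi 0 ∧ ∀ x ∈ S, ∀ y ∈ S, x + y ∈ S

/-- `0` is a limit point of `S`. -/
def DenseNearZero (S : Set ℝ) : Prop := ∀ ε > 0, ∃ x ∈ S, x < ε

/-- the `i`-th entry of `A x⃗`. -/
def mEntry {ι κ : Type} (A : ι → κ → ℚ) (x : κ → ℝ) (i : ι) : ℝ :=
  ∑ᶠ j, (A i j : ℝ) * x j

/-- admissible matrix: no zero row, finitely many nonzero entries in each row. -/
def Admissible {ι κ : Type} (A : ι → κ → ℚ) : Prop :=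
  (∀ i, A i ≠ 0) ∧ ∀ i, (Function.support (A i)).Finite

/-- `A` is image partition regular over `S`. -/
def IPRover {ι κ : Type} (S : Set ℝ) (A : ι → κ → ℚ) : Prop :=
  ∀ (k : ℕ) (c : ℝ → Fin (k + 1)), ∃ x : κ → ℝ, (∀ j, x j ∈ S) ∧
    ∃ m : Fin (k + 1), ∀ i, mEntry A x i ∈ S \ {0} ∧ c (mEntry A x i) = m

/-- `A` is image partition regular near zero over `S`. -/
def IPRNearZero {ι κ : Type} (S : Set ℝ) (A : ι → κ → ℚ) : Prop :=
  ∀ (k : ℕ) (c : ℝ → Fin (k + 1)), ∀ δ > (0 : ℝ), ∃ x : κ → ℝ, (∀ j, x j ∈ S) ∧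
    ∃ m : Fin (k + 1), ∀ i, mEntry A x i ∈ S \ {0} ∧
      mEntry A x i ∈ Set.Ioo 0 δ ∧ c (mEntry A x i) = m

/-- `I(A;S)`. -/
def ISet {ι κ : Type} (S : Set ℝ) (A : ι → κ → ℚ) : Set (Ultrafilter ℝ) :=
  {p | S ∈ p ∧ ∀ P ∈ p, ∃ x : κ → ℝ, (∀ j, x j ∈ S) ∧ ∀ i, mEntry A x i ∈ P}

/-- `O⁺(S)`. -/
def Oplus (S : Set ℝ) : Set (Ultrafilter ℝ) :=
  {p | ∀ ε > (0 : ℝ), Set.Ioo 0 ε ∩ S ∈ p}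

/-- `I₀(A;S)`. -/
def I0Set {ι κ : Type} (S : Set ℝ) (A : ι → κ → ℚ) : Set (Ultrafilter ℝ) :=
  {p | S ∈ p ∧ ∀ P ∈ p, ∀ ε > (0 : ℝ), ∃ x : κ → ℝ, (∀ j, x j ∈ S) ∧
      ∀ i, mEntry A x i ∈ P ∩ Set.Ioo 0 ε}

/-- multiplication of an ultrafilter by a real constant. -/
def mulU (c : ℝ) (p : Ultrafilter ℝ) : Ultrafilter ℝ := p.map fun x => c * x

/-- `q·p = q-lim_{n} (n·p)` for `q ∈ βℕ`, `p ∈ βℝ`. -/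
def actU (q : Ultrafilter ℕ) (p : Ultrafilter ℝ) : Ultrafilter ℝ :=
  q.bind fun n => p.map fun x => (n : ℝ) * x

/-- `I` is a two-sided ideal of `T ⊆ βℝ`. -/
def IsIdealIn (T I : Set (Ultrafilter ℝ)) : Prop :=
  I.Nonempty ∧ I ⊆ T ∧ ∀ p ∈ T, ∀ q ∈ I, uAdd p q ∈ I ∧ uAdd q p ∈ I

/-- the smallest two-sided ideal of `T`. -/
def KK (T : Set (Ultrafilter ℝ)) : Set (Ultrafilter ℝ) :=
  ⋂₀ {I | IsIdealIn T I}

/-- `L` is a left ideal of `T`. -/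
def IsLeftIdealIn (T L : Set (Ultrafilter ℝ)) : Prop :=
  L.Nonempty ∧ L ⊆ T ∧ ∀ p ∈ T, ∀ q ∈ L, uAdd p q ∈ L

/-- `L` is a minimal left ideal of `T`. -/
def IsMinLeftIdealIn (T L : Set (Ultrafilter ℝ)) : Prop :=
  IsLeftIdealIn T L ∧ ∀ L', IsLeftIdealIn T L' → L' ⊆ L → L' = L

/-- `C ⊆ S` is central near zero. -/
def CentralNearZero (S C : Set ℝ) : Prop :=
  ∃ p : Ultrafilter ℝ, p ∈ KK (Oplus S) ∧ uAdd p p = p ∧ C ∈ p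

/-- `C` is central* near zero: it belongs to every minimal idempotent of `O⁺(S)`. -/
def CentralStarNearZero (S C : Set ℝ) : Prop :=
  ∀ p : Ultrafilter ℝ, p ∈ KK (Oplus S) → uAdd p p = p → C ∈ p

/-- `C` is IP* near zero: it belongs to every idempotent of `O⁺(S)`. -/
def IPStarNearZero (S C : Set ℝ) : Prop :=
  ∀ p : Ultrafilter ℝ, p ∈ Oplus S → uAdd p p = p → C ∈ p

/-- `A` is centrally image partition regular near zero over `S`. -/
def CIPRNearZero {ι κ : Type} (S : Set ℝ) (A : ι → κ → ℚ) : Prop :=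
  ∀ C : Set ℝ, CentralNearZero S C →
    ∃ x : κ → ℝ, (∀ j, x j ∈ S) ∧ ∀ i, mEntry A x i ∈ C

/-- `T` is thick near zero in `S`. -/
def ThickNearZero (S T : Set ℝ) : Prop :=
  ∃ L : Set (Ultrafilter ℝ), IsLeftIdealIn (Oplus S) L ∧ ∀ p ∈ L, T ∈ p

/-- membership in the class `𝓜₀(S)`. -/
def MemM0 {ι κ : Type} (S : Set ℝ) (A : ι → κ → ℚ) : Prop :=
  Admissible A ∧ ∀ T : Set ℝ, ThickNearZero S T →
    ∀ (k : ℕ) (c : ℝ → Fin (k + 1)), ∃ x : κ → ℝ, (∀ j, x j ∈ S) ∧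
      ∃ m : Fin (k + 1), ∀ i, mEntry A x i ∈ T ∧ c (mEntry A x i) = m

/-- `A` is (finite) image partition regular (over ℕ). -/
def IPRoverNat {u v : ℕ} (A : Fin u → Fin v → ℚ) : Prop :=
  ∀ (k : ℕ) (c : ℕ → Fin (k + 1)), ∃ x : Fin v → ℕ, ∃ m : Fin (k + 1),
    ∀ i, ∃ n : ℕ, 0 < n ∧ (n : ℚ) = ∑ j, A i j * (x j : ℚ) ∧ c n = m

/-- the compressed form of a finitely supported integer vector: delete the zeros,
then collapse equal consecutive entries. -/
def compress (r : ℕ → ℤ) (hr : (Function.support r).Finite) : List ℤ :=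
  ((hr.toFinset.sort (· ≤ ·)).map r).destutter (· ≠ ·)

/-- `M` is the Milliken–Taylor matrix `MT(a⃗)`: its rows are exactly the finitely
supported integer vectors with compressed form `a⃗`. -/
def IsMTMatrix (a : List ℤ) (M : ℕ → ℕ → ℚ) : Prop :=
  (∀ i, ∃ (r : ℕ → ℤ) (hr : (Function.support r).Finite),
      (M i = fun j => (r j : ℚ)) ∧ compress r hr = a) ∧
  ∀ (r : ℕ → ℤ) (hr : (Function.support r).Finite),
    compress r hr = a → ∃ i, M i = fun j => (r j : ℚ)

/-- the sum `f 0 + (f 1 + (⋯ + f k))` in `(βℝ, +)`. -/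
def finSumU : ∀ {k : ℕ}, (Fin (k + 1) → Ultrafilter ℝ) → Ultrafilter ℝ
  | 0, f => f 0
  | _ + 1, f => uAdd (f 0) (finSumU fun i => f i.succ)

end

/-- the matrix `(1̄ B 0 ; 0̄ 0 M)`. -/
def oneBM {ι κ ιM κM : Type} (B : ι → κ → ℚ) (M : ιM → κM → ℚ) :
    ι ⊕ ιM → Unit ⊕ κ ⊕ κM → ℚ
  | Sum.inl _, Sum.inl _ => 1
  | Sum.inl i, Sum.inr (Sum.inl j) => B i j
  | Sum.inr i, Sum.inr (Sum.inr j) => M i j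
  | _, _ => 0

/-!
The sets `P` such that every finite coloring has, arbitrarily close to zero, monochromatic images
of `B` inside `P ∩ S` form a partition regular family, so some ultrafilter `p` consists of such
sets; it lies in `O⁺(S) ∩ I₀(B;S)`. Given a coloring `c` and `δ > 0`, let `T` be the set of
`t ∈ S ∩ (0, δ)` for which `c (a + b) = c t` for `p`-almost all `b`, for some `a ∈ S ∩ (0, δ/2)`.
Every `q + p` with `q ∈ O⁺(S)` contains `T`, so `T` is thick near zero and `M ∈ M₀(S)` gives
`y` with `M y` a monochromatic subset of `T`, of color `m` say. If `a` witnesses this for `M y`,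
choose `x` with `B x` inside `{b | c (a + b) = m} ∩ S ∩ (0, δ/2)`; then `(a, x, y)` is the
required monochromatic image.
-/

open Set Filter Function

theorem Ultrafilter.exists_forall_mem_of_partitionRegular {α : Type*} (G : Set (Set α))
    (hempty : ∅ ∉ G) (huniv : univ ∈ G) (hmono : ∀ s t, s ⊆ t → s ∈ G → t ∈ G)
    (hunion : ∀ s t, s ∪ t ∈ G → s ∈ G ∨ t ∈ G) :
    ∃ p : Ultrafilter α, ∀ s ∈ p, s ∈ G := by
  let F : Filter α := Filter.comk (· ∉ G) hempty (fun t ht s hst hs => ht (hmono s t hst hs))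
    fun s hs t ht hst => (hunion s t hst).elim hs ht
  have hF : F.NeBot := by
    refine Filter.forall_mem_nonempty_iff_neBot.mp fun s hs => ?_
    by_contra hs_empty
    rw [not_nonempty_iff_eq_empty.mp hs_empty] at hs
    exact (Filter.mem_comk.mp hs) (compl_empty ▸ huniv)
  refine ⟨Ultrafilter.of F, fun s hs => ?_⟩
  by_contra hsG
  have hsc : sᶜ ∈ Ultrafilter.of F :=
    Ultrafilter.of_le F (Filter.mem_comk.mpr (by rwa [compl_compl]))
  exact Ultrafilter.compl_notMem_iff.mpr hs hsc

theorem Ultrafilter.exists_preimage_singleton_mem {α β : Type*} [Finite β] (p : Ultrafilter α)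
    (f : α → β) : ∃ m, f ⁻¹' {m} ∈ p := by
  obtain ⟨m, hm⟩ := (p.map f).eq_pure_of_finite
  exact ⟨m, Ultrafilter.mem_map.mp (hm ▸ Ultrafilter.mem_pure.mpr rfl)⟩

theorem finite_support_sum_elim {α β M : Type*} [Zero M] {f : α → M} {g : β → M}
    (hf : (support f).Finite) (hg : (support g).Finite) : (support (Sum.elim f g)).Finite := by
  refine ((hf.image Sum.inl).union (hg.image Sum.inr)).subset ?_
  rintro (a | b) h
  exacts [Or.inl ⟨a, h, rfl⟩, Or.inr ⟨b, h, rfl⟩]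

theorem finsum_sum_elim {α β M : Type*} [AddCommMonoid M] {f : α → M} {g : β → M}
    (hf : (support f).Finite) (hg : (support g).Finite) :
    ∑ᶠ x, Sum.elim f g x = ∑ᶠ a, f a + ∑ᶠ b, g b := by
  classical
  have hfg : support (Sum.elim f g) ⊆ ↑(hf.toFinset.disjSum hg.toFinset) := by
    rintro (a | b) h <;> simpa using h
  rw [finsum_eq_sum_of_support_subset _ hfg, Finset.sum_disjSum,
    finsum_eq_sum_of_support_subset f hf.coe_toFinset.ge,
    finsum_eq_sum_of_support_subset g hg.coe_toFinset.ge]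
  rfl

theorem IsPosSubsemigroup.add_mem_Ioo_inter {S : Set ℝ} (hS : IsPosSubsemigroup S) {ε a b : ℝ}
    (ha : a ∈ Ioo 0 (ε / 2) ∩ S) (hb : b ∈ Ioo 0 (ε / 2) ∩ S) : a + b ∈ Ioo 0 ε ∩ S :=
  ⟨⟨add_pos ha.1.1 hb.1.1, by linarith [ha.1.2, hb.1.2]⟩, hS.2.2 a ha.2 b hb.2⟩

theorem mem_uAdd {p q : Ultrafilter ℝ} {A : Set ℝ} :
    A ∈ uAdd p q ↔ {x | {y | x + y ∈ A} ∈ q} ∈ p :=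
  Iff.rfl

theorem uAdd_assoc (p q r : Ultrafilter ℝ) : uAdd (uAdd p q) r = uAdd p (uAdd q r) := by
  ext A
  simp only [mem_uAdd, mem_ofPred_eq, add_assoc]

theorem uAdd_mem_Oplus {S : Set ℝ} (hS : IsPosSubsemigroup S) {p q : Ultrafilter ℝ}
    (hp : p ∈ Oplus S) (hq : q ∈ Oplus S) : uAdd p q ∈ Oplus S := fun _ hε =>
  mem_uAdd.mpr <| mem_of_superset (hp _ (half_pos hε)) fun _ ha =>
    mem_of_superset (hq _ (half_pos hε)) fun _ hb => hS.add_mem_Ioo_inter ha hb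

theorem isLeftIdealIn_Oplus_image_uAdd {S : Set ℝ} (hS : IsPosSubsemigroup S)
    {p : Ultrafilter ℝ} (hp : p ∈ Oplus S) :
    IsLeftIdealIn (Oplus S) ((uAdd · p) '' Oplus S) := by
  refine ⟨⟨_, p, hp, rfl⟩, ?_, ?_⟩
  · rintro _ ⟨q, hq, rfl⟩
    exact uAdd_mem_Oplus hS hq hp
  · rintro r hr _ ⟨q, hq, rfl⟩
    exact ⟨uAdd r q, uAdd_mem_Oplus hS hr hq, uAdd_assoc r q p⟩

theorem thickNearZero_of_forall_preimage_add_mem {S T : Set ℝ} (hS : IsPosSubsemigroup S)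
    {p : Ultrafilter ℝ} (hp : p ∈ Oplus S) {ε : ℝ} (hε : 0 < ε)
    (hT : ∀ a ∈ Ioo 0 ε ∩ S, (a + ·) ⁻¹' T ∈ p) : ThickNearZero S T := by
  refine ⟨_, isLeftIdealIn_Oplus_image_uAdd hS hp, ?_⟩
  rintro _ ⟨q, hq, rfl⟩
  exact mem_uAdd.mpr (mem_of_superset (hq ε hε) hT)

theorem thickNearZero_setOf_fiber_mem {C : Type} [Finite C] {S : Set ℝ}
    (hS : IsPosSubsemigroup S) {p : Ultrafilter ℝ} (hp : p ∈ Oplus S) (c : ℝ → C) {δ : ℝ}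
    (hδ : 0 < δ) :
    ThickNearZero S {t | t ∈ Ioo 0 δ ∩ S ∧ ∃ a ∈ Ioo 0 (δ / 2) ∩ S, {b | c (a + b) = c t} ∈ p} := by
  refine thickNearZero_of_forall_preimage_add_mem hS hp (half_pos hδ) fun a ha => ?_
  obtain ⟨m, hm⟩ := p.exists_preimage_singleton_mem fun b => c (a + b)
  filter_upwards [hm, hp _ (half_pos hδ)] with b hbm hb
  exact ⟨hS.add_mem_Ioo_inter ha hb, a, ha, by rwa [show c (a + b) = m from hbm]⟩

/-- Colorings take values in arbitrary finite types, so that two of them can be merged into one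
with values in the sum type. -/
def IPRNearZeroIn {ι κ : Type} (S : Set ℝ) (B : ι → κ → ℚ) (P : Set ℝ) : Prop :=
  ∀ (C : Type) [Finite C] (c : ℝ → C), ∀ δ > (0 : ℝ), ∃ x : κ → ℝ, (∀ j, x j ∈ S) ∧
    ∃ m, ∀ i, mEntry B x i ∈ P ∩ (Ioo 0 δ ∩ S) ∧ c (mEntry B x i) = m

section

variable {ι κ : Type} {S : Set ℝ} {B : ι → κ → ℚ} {P Q : Set ℝ}

theorem IPRNearZero.iprNearZeroIn_univ (hB : IPRNearZero S B) : IPRNearZeroIn S B univ := by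
  intro C _ c δ hδ
  have : Nonempty C := ⟨c 0⟩
  obtain ⟨k, hk⟩ := Nat.exists_eq_succ_of_ne_zero (Nat.card_pos (α := C)).ne'
  let e : C ≃ Fin (k + 1) := (Finite.equivFin C).trans (finCongr hk)
  obtain ⟨x, hxS, m, hx⟩ := hB k (e ∘ c) δ hδ
  exact ⟨x, hxS, e.symm m, fun i =>
    ⟨⟨trivial, (hx i).2.1, (hx i).1.1⟩, e.eq_symm_apply.mpr (hx i).2.2⟩⟩

namespace IPRNearZeroIn

theorem exists_image (h : IPRNearZeroIn S B P) {δ : ℝ} (hδ : 0 < δ) :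
    ∃ x : κ → ℝ, (∀ j, x j ∈ S) ∧ ∀ i, mEntry B x i ∈ P ∩ (Ioo 0 δ ∩ S) := by
  obtain ⟨x, hxS, _, hx⟩ := h Unit (fun _ => ()) δ hδ
  exact ⟨x, hxS, fun i => (hx i).1⟩

theorem inter_nonempty [Nonempty ι] (h : IPRNearZeroIn S B P) {δ : ℝ} (hδ : 0 < δ) :
    (P ∩ (Ioo 0 δ ∩ S)).Nonempty := by
  obtain ⟨x, -, hx⟩ := h.exists_image hδ
  exact ⟨_, hx (Classical.arbitrary ι)⟩

theorem mono (h : IPRNearZeroIn S B P) (hPQ : P ⊆ Q) : IPRNearZeroIn S B Q := by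
  intro C _ c δ hδ
  obtain ⟨x, hxS, m, hx⟩ := h C c δ hδ
  exact ⟨x, hxS, m, fun i => ⟨⟨hPQ (hx i).1.1, (hx i).1.2⟩, (hx i).2⟩⟩

/-- A coloring of `P` without good monochromatic images and any coloring of `Q` merge into
a coloring of `P ∪ Q`, whose good monochromatic images must then lie in `Q`. -/
theorem of_union (h : IPRNearZeroIn S B (P ∪ Q)) :
    IPRNearZeroIn S B P ∨ IPRNearZeroIn S B Q := by
  classical
  refine or_iff_not_imp_left.mpr fun hP => ?_
  simp only [IPRNearZeroIn, not_forall] at hP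
  obtain ⟨C₁, _, c₁, δ₁, hδ₁, hbad⟩ := hP
  intro C₂ _ c₂ δ hδ
  obtain ⟨x, hxS, m, hx⟩ := h (C₁ ⊕ C₂) (fun r => if r ∈ P then .inl (c₁ r) else .inr (c₂ r))
    (min δ δ₁) (lt_min hδ hδ₁)
  have hI₁ : Ioo 0 (min δ δ₁) ⊆ Ioo 0 δ₁ := Ioo_subset_Ioo_right (min_le_right _ _)
  have hI : Ioo 0 (min δ δ₁) ⊆ Ioo 0 δ := Ioo_subset_Ioo_right (min_le_left _ _)
  cases m with
  | inl m₁ =>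
    refine absurd ⟨x, hxS, m₁, fun i => ?_⟩ hbad
    obtain ⟨⟨-, hiI, hiS⟩, hc⟩ := hx i
    have hiP : mEntry B x i ∈ P := by
      by_contra hiP
      simp [hiP] at hc
    rw [if_pos hiP] at hc
    exact ⟨⟨hiP, hI₁ hiI, hiS⟩, Sum.inl_injective hc⟩
  | inr m₂ =>
    refine ⟨x, hxS, m₂, fun i => ?_⟩
    obtain ⟨⟨hiPQ, hiI, hiS⟩, hc⟩ := hx i
    have hiP : mEntry B x i ∉ P := by
      intro hiP
      simp [hiP] at hc
    rw [if_neg hiP] at hc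
    exact ⟨⟨hiPQ.resolve_left hiP, hI hiI, hiS⟩, Sum.inr_injective hc⟩

end IPRNearZeroIn

end

theorem exists_mem_Oplus_inter_I0Set {ι κ : Type} [Nonempty ι] {S : Set ℝ} {B : ι → κ → ℚ}
    (hB : IPRNearZero S B) : ∃ p, p ∈ Oplus S ∩ I0Set S B := by
  obtain ⟨p, hp⟩ := Ultrafilter.exists_forall_mem_of_partitionRegular {P | IPRNearZeroIn S B P}
    (fun h => by simpa using h.inter_nonempty one_pos) hB.iprNearZeroIn_univ
    (fun _ _ hPQ h => h.mono hPQ) fun _ _ h => h.of_union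
  have hpO : p ∈ Oplus S := fun ε hε => by
    by_contra hε'
    obtain ⟨r, hr, hr'⟩ := (hp _ (Ultrafilter.compl_mem_iff_notMem.mpr hε')).inter_nonempty hε
    exact hr hr'
  refine ⟨p, hpO, mem_of_superset (hpO 1 one_pos) inter_subset_right, fun P hP ε hε => ?_⟩
  obtain ⟨x, hxS, hx⟩ := (hp P hP).exists_image hε
  exact ⟨x, hxS, fun i => ⟨(hx i).1, (hx i).2.1⟩⟩

theorem finite_support_of_mEntry_ne_zero {ι κ : Type} {A : ι → κ → ℚ} {x : κ → ℝ} {i : ι}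
    (h : mEntry A x i ≠ 0) : (support fun j => (A i j : ℝ) * x j).Finite := by
  by_contra hinf
  exact h (finsum_of_infinite_support hinf)

theorem mEntry_oneBM_inl {ι κ ιM κM : Type} (B : ι → κ → ℚ) (M : ιM → κM → ℚ) (a : ℝ)
    (x : κ → ℝ) (y : κM → ℝ) (i : ι) (hx : (support fun j => (B i j : ℝ) * x j).Finite) :
    mEntry (oneBM B M) (Sum.elim (fun _ => a) (Sum.elim x y)) (Sum.inl i) = a + mEntry B x i := by
  have hrow : (fun j => (oneBM B M (Sum.inl i) j : ℝ) * Sum.elim (fun _ => a) (Sum.elim x y) j) =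
      Sum.elim (fun _ => a) (Sum.elim (fun j => (B i j : ℝ) * x j) fun _ => 0) := by
    funext j
    rcases j with _ | j | j <;> simp [oneBM]
  rw [mEntry, hrow, finsum_sum_elim (toFinite _), finsum_sum_elim hx (by simp), finsum_unique,
    finsum_zero, add_zero, mEntry]
  exact finite_support_sum_elim hx (by simp)

theorem mEntry_oneBM_inr {ι κ ιM κM : Type} (B : ι → κ → ℚ) (M : ιM → κM → ℚ) (a : ℝ)
    (x : κ → ℝ) (y : κM → ℝ) (i : ιM) (hy : (support fun j => (M i j : ℝ) * y j).Finite) :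
    mEntry (oneBM B M) (Sum.elim (fun _ => a) (Sum.elim x y)) (Sum.inr i) = mEntry M y i := by
  have hrow : (fun j => (oneBM B M (Sum.inr i) j : ℝ) * Sum.elim (fun _ => a) (Sum.elim x y) j) =
      Sum.elim (fun _ => 0) (Sum.elim (fun _ => 0) fun j => (M i j : ℝ) * y j) := by
    funext j
    rcases j with _ | j | j <;> simp [oneBM]
  rw [mEntry, hrow, finsum_sum_elim (toFinite _), finsum_sum_elim (by simp) hy]
  · simp only [finsum_zero, zero_add, mEntry]
  · exact finite_support_sum_elim (by simp) hy

theorem stmt17_general {ι κ ιM κM : Type} [Nonempty ι]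
    (S : Set ℝ) (hS : IsPosSubsemigroup S)
    (B : ι → κ → ℚ) (hB : IPRNearZero S B)
    (M : ιM → κM → ℚ) (hM : MemM0 S M) :
    IPRNearZero S (oneBM B M) := by
  obtain ⟨p, hpO, -, hpI⟩ := exists_mem_Oplus_inter_I0Set hB
  intro k c δ hδ
  have hδ2 : 0 < δ / 2 := half_pos hδ
  obtain ⟨y, hyS, m₀, hy⟩ := hM.2 _ (thickNearZero_setOf_fiber_mem hS hpO c hδ) k c
  obtain ⟨a, ha, m, hap, hyT⟩ : ∃ a ∈ Ioo 0 (δ / 2) ∩ S, ∃ m, {b | c (a + b) = m} ∈ p ∧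
      ∀ i, mEntry M y i ∈ Ioo 0 δ ∩ S ∧ c (mEntry M y i) = m := by
    rcases isEmpty_or_nonempty ιM with hιM | ⟨⟨i⟩⟩
    · obtain ⟨a, ha⟩ := p.nonempty_of_mem (hpO _ hδ2)
      obtain ⟨m, hm⟩ := p.exists_preimage_singleton_mem fun b => c (a + b)
      exact ⟨a, ha, m, hm, isEmptyElim⟩
    · obtain ⟨-, a, ha, hap⟩ := (hy i).1
      exact ⟨a, ha, m₀, (hy i).2 ▸ hap, fun i => ⟨(hy i).1.1, (hy i).2⟩⟩
  obtain ⟨x, hxS, hx⟩ := hpI _ (inter_mem hap (hpO _ hδ2)) _ hδ2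
  refine ⟨Sum.elim (fun _ => a) (Sum.elim x y), ?_, m, ?_⟩
  · rintro (_ | j | j)
    exacts [ha.2, hxS j, hyS j]
  · rintro (i | i)
    · obtain ⟨⟨hc, hb⟩, -⟩ := hx i
      have hab := hS.add_mem_Ioo_inter ha hb
      rw [mEntry_oneBM_inl B M a x y i (finite_support_of_mEntry_ne_zero hb.1.1.ne')]
      exact ⟨⟨hab.2, hab.1.1.ne'⟩, hab.1, hc⟩
    · obtain ⟨⟨hyI, hyS'⟩, hc⟩ := hyT i
      rw [mEntry_oneBM_inr B M a x y i (finite_support_of_mEntry_ne_zero hyI.1.ne')]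
      exact ⟨⟨hyS', hyI.1.ne'⟩, hyI, hc⟩

/-- If `B` is image partition regular near zero over `S` and
`M ∈ 𝓜₀(S)`, then `(1̄ B 0 ; 0̄ 0 M)` is image partition regular near zero over `S`. -/
theorem stmt17 {ι κ ιM κM : Type} [Countable ι] [Countable κ] [Countable ιM]
    [Countable κM] [Nonempty ι] [Nonempty κ]
    (S : Set ℝ) (hS : IsPosSubsemigroup S) (hd : DenseNearZero S)
    (B : ι → κ → ℚ) (hBadm : Admissible B) (hB : IPRNearZero S B)
    (M : ιM → κM → ℚ) (hM : MemM0 S M) :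
    IPRNearZero S (oneBM B M) :=
  stmt17_general S hS B hB M hM
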